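/- arXiv:2002.11176 — 7 statements merged into one kernel-verified Lean document; each statement's English description precedes it below -/
import Mathlib

section
/- Let G be a group, d ≥ 1, and let D : G → Matrix (Fin d) (Fin d) ℂ be a projective unitary representation: each D g is unitary and there is ω : G → G → ℂˣ such that D g * D h = (ω g h : ℂ) • D (g*h) for all g, h. Assume ω is not a coboundary, i.e. there is NO θ : G → ℂˣ with (ω g h : ℂ) = (θ g : ℂ) * (θ h : ℂ) * ((θ (g*h))⁻¹ : ℂ) for all g, h. Let N ≥ 1, let A : Fin d → Matrix (Fin N) (Fin N) ℂ, and let V : G → Matrix (Fin N) (Fin N) ℂ with each V g unitary, satisfying the symmetry condition: for all g ∈ G and all m : Fin d, ∑ n, (D g) m n • A n = (V g)ᴴ * A m * (V g). Then for every I ≥ 1 the map Γ_I is not injective; in particular the MPS built from A is not injective at any length (generalized LSM theorem: a projectively realized on-site symmetry together with translation invariance forbids an injective, i.e. unique gapped, matrix product ground state). -/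
/-!
Put `U = V g * V h * (V (g * h))ᴴ`. Applying the symmetry for `g` and then for `h`, and comparing
with the symmetry for `g * h` through `D g * D h = ω g h • D (g * h)`, gives
`A m * U = ω g h • (U * A m)`. Hence `Uᴴ X U = ω g h ^ I • X` for every product `X` of `I` tensors,
and cyclicity of the trace turns this into `Γ_I (U M Uᴴ) = Γ_I (ω g h ^ I • M)`. If `Γ_I` is
injective, `U M Uᴴ = ω g h ^ I • M` for all `M`: with `M = 1` this gives `ω g h ^ I = 1`, so `U`
is central and `A m = ω g h • A m`. An injective `Γ_I` also needs some `A m ≠ 0`, so `ω = 1`,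
which is a coboundary.
-/

open Matrix

/-- The MPS map `Γ_I`: given an MPS tensor `A`, length `I` and a boundary matrix `M`,
returns the coefficient function `σ ↦ trace (M * A (σ 0) * ⋯ * A (σ (I-1)))`. -/
noncomputable def GammaMPS {N : ℕ} {ι : Type*} (A : ι → Matrix (Fin N) (Fin N) ℂ)
    (I : ℕ) (M : Matrix (Fin N) (Fin N) ℂ) : (Fin I → ι) → ℂ :=
  fun σ => Matrix.trace (M * (List.ofFn fun i => A (σ i)).prod)

theorem List.prod_mul_eq_pow_length_smul_mul {R M : Type*} [CommMonoid R] [Monoid M]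
    [MulAction R M] [IsScalarTower R M M] [SMulCommClass R M M] {u : M} {c : R} :
    ∀ {l : List M}, (∀ a ∈ l, a * u = c • (u * a)) → l.prod * u = c ^ l.length • (u * l.prod)
  | [], _ => by simp
  | a :: l, h => by
    rw [List.prod_cons, mul_assoc,
      prod_mul_eq_pow_length_smul_mul (fun b hb => h b (List.mem_cons_of_mem a hb)),
      mul_smul_comm, ← mul_assoc, h a List.mem_cons_self, smul_mul_assoc, smul_smul,
      List.length_cons, pow_succ, mul_assoc]

theorem Matrix.sum_mul_apply_smul {ι R M : Type*} [Fintype ι] [CommSemiring R]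
    [AddCommMonoid M] [Module R M] {P Q : Matrix ι ι R} {a : ι → M} {f g : M →ₗ[R] M}
    (hP : ∀ i, ∑ j, P i j • a j = f (a i)) (hQ : ∀ i, ∑ j, Q i j • a j = g (a i)) (i : ι) :
    ∑ j, (P * Q) i j • a j = g (f (a i)) := by
  simp_rw [mul_apply, Finset.sum_smul, mul_smul]
  rw [Finset.sum_comm]
  simp_rw [← Finset.smul_sum, hQ, ← map_smul, ← map_sum, hP]

theorem Unitary.mul_mul_star_eq_smul {R S : Type*} [Monoid R] [StarMul R] [Monoid S]
    [MulAction S R] [IsScalarTower S R R] [SMulCommClass S R R] {u v : R}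
    (hu : u ∈ unitary R) (hv : v ∈ unitary R) {c : S} {a : R}
    (h : c • (star v * a * v) = star u * a * u) :
    a * (u * star v) = c • (u * star v * a) := by
  calc a * (u * star v) = u * (star u * a * u) * star v := by
        rw [← mul_assoc, ← mul_assoc, ← mul_assoc, Unitary.mul_star_self_of_mem hu, one_mul,
          mul_assoc]
    _ = c • (u * star v * a) := by
        rw [← h, mul_smul_comm, smul_mul_assoc, mul_assoc, mul_assoc, mul_assoc,
          Unitary.mul_star_self_of_mem hv, mul_one, mul_assoc]

section ProjectiveSymmetry

variable {G ι n : Type*} [Group G] [Fintype ι] [Fintype n]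
  {D : G → Matrix ι ι ℂ} {ω : G → G → ℂˣ} {A : ι → Matrix n n ℂ} {V : G → Matrix n n ℂ}

theorem smul_conj_mul_eq_conj_conj (hproj : ∀ g h, D g * D h = (ω g h : ℂ) • D (g * h))
    (hsym : ∀ g m, ∑ k, D g m k • A k = (V g)ᴴ * A m * V g) (g h : G) (m : ι) :
    (ω g h : ℂ) • ((V (g * h))ᴴ * A m * V (g * h)) = (V h)ᴴ * ((V g)ᴴ * A m * V g) * V h := by
  have hconj : ∀ g m, ∑ k, D g m k • A k = LinearMap.mulLeftRight ℂ ((V g)ᴴ, V g) (A m) :=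
    hsym
  calc (ω g h : ℂ) • ((V (g * h))ᴴ * A m * V (g * h))
      = ∑ k, (D g * D h) m k • A k := by
        simp only [← hsym, hproj, Finset.smul_sum, Matrix.smul_apply, smul_eq_mul, mul_smul]
    _ = (V h)ᴴ * ((V g)ᴴ * A m * V g) * V h := Matrix.sum_mul_apply_smul (hconj g) (hconj h) m

theorem mul_mul_conjTranspose_eq_smul [DecidableEq n]
    (hproj : ∀ g h, D g * D h = (ω g h : ℂ) • D (g * h))
    (hVunitary : ∀ g, V g ∈ unitaryGroup n ℂ)
    (hsym : ∀ g m, ∑ k, D g m k • A k = (V g)ᴴ * A m * V g) (g h : G) (m : ι) :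
    A m * (V g * V h * (V (g * h))ᴴ) = (ω g h : ℂ) • (V g * V h * (V (g * h))ᴴ * A m) :=
  Unitary.mul_mul_star_eq_smul (mul_mem (hVunitary g) (hVunitary h)) (hVunitary (g * h))
    (by
      rw [star_eq_conjTranspose, star_eq_conjTranspose, smul_conj_mul_eq_conj_conj hproj hsym,
        conjTranspose_mul]
      simp only [mul_assoc])

end ProjectiveSymmetry

section GammaMPS

variable {N : ℕ} {ι : Type*} {A : ι → Matrix (Fin N) (Fin N) ℂ} {I : ℕ}

theorem GammaMPS_conj_of_mul_eq_smul_mul {U : Matrix (Fin N) (Fin N) ℂ}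
    (hU : U ∈ unitaryGroup (Fin N) ℂ) {c : ℂ} (hcomm : ∀ m, A m * U = c • (U * A m))
    (M : Matrix (Fin N) (Fin N) ℂ) :
    GammaMPS A I (U * M * star U) = GammaMPS A I (c ^ I • M) := by
  funext σ
  set X := (List.ofFn fun i => A (σ i)).prod
  have hX : X * U = c ^ I • (U * X) := by
    simpa using List.prod_mul_eq_pow_length_smul_mul (l := List.ofFn fun i => A (σ i))
      (by simp [List.mem_ofFn, hcomm])
  calc trace (U * M * star U * X) = trace (M * (star U * (X * U))) := by
        rw [trace_mul_cycle, trace_mul_cycle', ← mul_assoc, ← mul_assoc, mul_assoc]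
    _ = trace (c ^ I • M * X) := by
        rw [hX, mul_smul_comm, ← mul_assoc, Unitary.star_mul_self_of_mem hU, one_mul,
          mul_smul_comm, smul_mul_assoc]

theorem eq_smul_self_of_injective_GammaMPS [NeZero N] (hinj : Function.Injective (GammaMPS A I))
    {U : Matrix (Fin N) (Fin N) ℂ} (hU : U ∈ unitaryGroup (Fin N) ℂ) {c : ℂ}
    (hcomm : ∀ m, A m * U = c • (U * A m)) (m : ι) : A m = c • A m := by
  have hconj : ∀ M, U * M * star U = c ^ I • M := fun M =>
    hinj (GammaMPS_conj_of_mul_eq_smul_mul hU hcomm M)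
  have hcI : c ^ I = 1 := by
    refine smul_left_injective ℂ (one_ne_zero (α := Matrix (Fin N) (Fin N) ℂ)) ?_
    simp only [← hconj 1, mul_one, Unitary.mul_star_self_of_mem hU, one_smul]
  have hUA : U * A m = A m * U :=
    calc U * A m = U * A m * star U * U := by
          rw [mul_assoc _ (star U), Unitary.star_mul_self_of_mem hU, mul_one]
      _ = A m * U := by rw [hconj, hcI, one_smul]
  calc A m = A m * U * star U := by rw [mul_assoc, Unitary.mul_star_self_of_mem hU, mul_one]
    _ = c • A m := by
        rw [hcomm, hUA, smul_mul_assoc, mul_assoc, Unitary.mul_star_self_of_mem hU, mul_one]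

theorem exists_ne_zero_of_injective_GammaMPS [NeZero N] (hI : I ≠ 0)
    (hinj : Function.Injective (GammaMPS A I)) : ∃ m, A m ≠ 0 := by
  by_contra! hA
  refine one_ne_zero (α := Matrix (Fin N) (Fin N) ℂ) (hinj (funext fun σ => ?_))
  obtain ⟨I, rfl⟩ := Nat.exists_eq_succ_of_ne_zero hI
  simp [GammaMPS, List.ofFn_succ, hA]

end GammaMPS

theorem generalized_LSM_general {G : Type*} [Group G] {d : ℕ}
    (D : G → Matrix (Fin d) (Fin d) ℂ)
    (ω : G → G → ℂˣ)
    (hproj : ∀ g h, D g * D h = (ω g h : ℂ) • D (g * h))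
    (hnotcob : ¬ ∃ θ : G → ℂˣ, ∀ g h,
      (ω g h : ℂ) = (θ g : ℂ) * (θ h : ℂ) * (((θ (g * h))⁻¹ : ℂˣ) : ℂ))
    {N : ℕ} (hN : 1 ≤ N)
    (A : Fin d → Matrix (Fin N) (Fin N) ℂ)
    (V : G → Matrix (Fin N) (Fin N) ℂ)
    (hVunitary : ∀ g, V g ∈ Matrix.unitaryGroup (Fin N) ℂ)
    (hsym : ∀ (g : G) (m : Fin d), ∑ n, (D g) m n • A n = (V g)ᴴ * A m * V g) :
    ∀ I, 1 ≤ I → ¬ Function.Injective (GammaMPS A I) := by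
  intro I hI hinj
  have : NeZero N := ⟨by omega⟩
  obtain ⟨m, hm⟩ := exists_ne_zero_of_injective_GammaMPS (by omega) hinj
  refine hnotcob ⟨1, fun g h => ?_⟩
  have hU : V g * V h * (V (g * h))ᴴ ∈ unitaryGroup (Fin N) ℂ :=
    mul_mem (mul_mem (hVunitary g) (hVunitary h)) (Unitary.star_mem (hVunitary (g * h)))
  have hfix : A m = (ω g h : ℂ) • A m := eq_smul_self_of_injective_GammaMPS hinj hU
    (mul_mul_conjTranspose_eq_smul hproj hVunitary hsym g h) m
  have hω : (ω g h : ℂ) = 1 := smul_left_injective ℂ hm (by simpa using hfix.symm)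
  simp [hω]

/-- Generalized LSM theorem: a projectively realized on-site symmetry (whose factor
system is not a coboundary) together with translation invariance forbids an injective
matrix product ground state at any length. -/
theorem generalized_LSM {G : Type*} [Group G] {d : ℕ} (hd : 1 ≤ d)
    (D : G → Matrix (Fin d) (Fin d) ℂ)
    (hDunitary : ∀ g, D g ∈ Matrix.unitaryGroup (Fin d) ℂ)
    (ω : G → G → ℂˣ)
    (hproj : ∀ g h, D g * D h = (ω g h : ℂ) • D (g * h))
    (hnotcob : ¬ ∃ θ : G → ℂˣ, ∀ g h,
      (ω g h : ℂ) = (θ g : ℂ) * (θ h : ℂ) * (((θ (g * h))⁻¹ : ℂˣ) : ℂ))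
    {N : ℕ} (hN : 1 ≤ N)
    (A : Fin d → Matrix (Fin N) (Fin N) ℂ)
    (V : G → Matrix (Fin N) (Fin N) ℂ)
    (hVunitary : ∀ g, V g ∈ Matrix.unitaryGroup (Fin N) ℂ)
    (hsym : ∀ (g : G) (m : Fin d), ∑ n, (D g) m n • A n = (V g)ᴴ * A m * V g) :
    ∀ I, 1 ≤ I → ¬ Function.Injective (GammaMPS A I) :=
  generalized_LSM_general D ω hproj hnotcob hN A V hVunitary hsym
end

section
/- Let G be a group, d ≥ 1, and let D : G → Matrix (Fin d) (Fin d) ℂ with each D g unitary and ω : G → G → ℂˣ such that D g * D h = (ω g h : ℂ) • D (g*h) for all g, h. Let N ≥ 1, A : Fin d → Matrix (Fin N) (Fin N) ℂ, and V : G → Matrix (Fin N) (Fin N) ℂ with each V g unitary, satisfying: for all g ∈ G and all m : Fin d, ∑ n, (D g) m n • A n = (V g)ᴴ * A m * (V g). If the map Γ_I is injective for some I ≥ 1, then ω g h = 1 for all g, h ∈ G; in particular D is a genuine linear representation of G (injectivity of a symmetric translation-invariant MPS forces the on-site symmetry to be realized linearly). -/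
/-!
Composing the symmetries of `g` and `h` and comparing with that of `g * h` shows that the
rescaled tensor `ω g h • A` is unitarily conjugate to `A`: `c • A m = U * A m * star U`.
Pushed through `Γ_I` this reads `Γ_I (c ^ I • M) = Γ_I (star U * M * U)`, so injectivity gives
`c ^ I • M = star U * M * U` for every boundary matrix `M`. Taking `M = 1` yields `c ^ I = 1`, so
conjugation by `U` is trivial and `c • A = A`; since injectivity also forces `A ≠ 0`, `c = 1`.
-/

open Matrix

theorem sum_mul_apply_smul_of_sum_apply_smul_eq {ι R S : Type*} [Fintype ι] [CommSemiring R]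
    [Semiring S] [StarMul S] [Algebra R S] {A : ι → S} {X Y : Matrix ι ι R} {P Q : S}
    (hX : ∀ m, ∑ n, X m n • A n = star P * A m * P)
    (hY : ∀ m, ∑ n, Y m n • A n = star Q * A m * Q) (m : ι) :
    ∑ n, (X * Y) m n • A n = star (P * Q) * A m * (P * Q) := by
  calc ∑ n, (X * Y) m n • A n = ∑ k, X m k • ∑ n, Y k n • A n := by
        simp only [Matrix.mul_apply, Finset.sum_smul, Finset.smul_sum, smul_smul]
        exact Finset.sum_comm
    _ = star Q * (∑ k, X m k • A k) * Q := by
        simp only [hY, Finset.mul_sum, Finset.sum_mul, mul_smul_comm, smul_mul_assoc]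
    _ = star (P * Q) * A m * (P * Q) := by
        rw [hX, star_mul]; simp only [mul_assoc]

section GammaMPS

variable {N : ℕ} {ι : Type*} (A : ι → Matrix (Fin N) (Fin N) ℂ) (I : ℕ)

theorem GammaMPS_smul (c : ℂ) (M : Matrix (Fin N) (Fin N) ℂ) :
    GammaMPS (fun m => c • A m) I M = GammaMPS A I (c ^ I • M) := by
  ext σ
  have hprod := List.smul_prod (List.ofFn fun i => A (σ i)) c
  rw [List.length_ofFn, List.map_ofFn] at hprod
  simp only [GammaMPS, Function.comp_def] at hprod ⊢
  rw [← hprod, mul_smul_comm, smul_mul_assoc]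

theorem GammaMPS_conj {u : Matrix (Fin N) (Fin N) ℂ} (hu : u ∈ unitaryGroup (Fin N) ℂ)
    (M : Matrix (Fin N) (Fin N) ℂ) :
    GammaMPS (fun m => u * A m * star u) I M = GammaMPS A I (star u * M * u) := by
  ext σ
  have hprod :=
    map_list_prod (Unitary.conjStarAlgAut ℂ _ ⟨u, hu⟩) (List.ofFn fun i => A (σ i))
  simp only [List.map_ofFn, Function.comp_def, Unitary.conjStarAlgAut_apply] at hprod
  simp only [GammaMPS, ← hprod]
  rw [← Matrix.mul_assoc, Matrix.trace_mul_comm, Matrix.mul_assoc, Matrix.mul_assoc]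

variable {A I}

theorem ne_zero_of_injective_GammaMPS [NeZero N] (hI : I ≠ 0)
    (hinj : Function.Injective (GammaMPS A I)) : A ≠ 0 := by
  rintro rfl
  have hzero : ∀ M, GammaMPS (0 : ι → Matrix (Fin N) (Fin N) ℂ) I M = 0 := fun M => by
    ext σ
    simp [GammaMPS, zero_pow hI]
  exact one_ne_zero (hinj ((hzero 1).trans (hzero 0).symm))

theorem eq_one_of_smul_eq_conj_of_injective_GammaMPS [NeZero N] (hI : I ≠ 0)
    (hinj : Function.Injective (GammaMPS A I)) {u : Matrix (Fin N) (Fin N) ℂ}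
    (hu : u ∈ unitaryGroup (Fin N) ℂ) {c : ℂ} (hc : ∀ m, c • A m = u * A m * star u) :
    c = 1 := by
  have hM : ∀ M, c ^ I • M = star u * M * u := fun M =>
    hinj <| by rw [← GammaMPS_smul, ← GammaMPS_conj _ _ hu]; simp only [hc]
  have hcI : c ^ I = 1 := by
    have h1 := hM 1
    rw [Matrix.mul_one, Unitary.star_mul_self_of_mem hu, ← one_smul ℂ (1 : Matrix _ _ ℂ),
      smul_smul, mul_one] at h1
    exact smul_left_injective ℂ one_ne_zero h1
  have hfix : ∀ m, u * A m * star u = A m := fun m => by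
    rw [← one_smul ℂ (u * A m * star u), ← hcI, hM]
    simp only [← Matrix.mul_assoc, Unitary.star_mul_self_of_mem hu, Matrix.one_mul]
    rw [Matrix.mul_assoc, Unitary.star_mul_self_of_mem hu, Matrix.mul_one]
  obtain ⟨m, hm⟩ := Function.ne_iff.mp (ne_zero_of_injective_GammaMPS hI hinj)
  exact smul_left_injective ℂ hm ((hc m).trans ((hfix m).trans (one_smul ℂ _).symm))

end GammaMPS

theorem injective_MPS_forces_linear_symmetry_general {G : Type*} [Group G] {d : ℕ}
    (D : G → Matrix (Fin d) (Fin d) ℂ)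
    (ω : G → G → ℂˣ)
    (hproj : ∀ g h, D g * D h = (ω g h : ℂ) • D (g * h))
    {N : ℕ} (hN : 1 ≤ N)
    (A : Fin d → Matrix (Fin N) (Fin N) ℂ)
    (V : G → Matrix (Fin N) (Fin N) ℂ)
    (hVunitary : ∀ g, V g ∈ Matrix.unitaryGroup (Fin N) ℂ)
    (hsym : ∀ (g : G) (m : Fin d), ∑ n, (D g) m n • A n = (V g)ᴴ * A m * V g)
    (I : ℕ) (hI : 1 ≤ I) (hinj : Function.Injective (GammaMPS A I)) :
    ∀ g h : G, ω g h = 1 := by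
  simp only [← Matrix.star_eq_conjTranspose] at hsym
  intro g h
  have : NeZero N := ⟨by omega⟩
  have hcomp : ∀ m, (ω g h : ℂ) • (star (V (g * h)) * A m * V (g * h))
      = star (V g * V h) * A m * (V g * V h) := fun m => by
    rw [← sum_mul_apply_smul_of_sum_apply_smul_eq (hsym g) (hsym h), hproj]
    simp only [Matrix.smul_apply, smul_eq_mul, mul_smul, ← Finset.smul_sum, hsym]
  have hVgh := hVunitary (g * h)
  have hu : V (g * h) * star (V g * V h) ∈ unitaryGroup (Fin N) ℂ :=
    mul_mem hVgh (Unitary.star_mem (mul_mem (hVunitary g) (hVunitary h)))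
  refine Units.val_eq_one.mp <|
    eq_one_of_smul_eq_conj_of_injective_GammaMPS (by omega) hinj hu fun m => ?_
  calc (ω g h : ℂ) • A m
      = V (g * h) * ((ω g h : ℂ) • (star (V (g * h)) * A m * V (g * h)))
          * star (V (g * h)) := by
        simp only [mul_smul_comm, smul_mul_assoc, ← mul_assoc, Unitary.mul_star_self_of_mem hVgh,
          one_mul]
        simp only [mul_assoc, Unitary.mul_star_self_of_mem hVgh, mul_one]
    _ = V (g * h) * star (V g * V h) * A m * star (V (g * h) * star (V g * V h)) := by
        rw [hcomp, star_mul (V (g * h)), star_star]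
        simp only [mul_assoc]

/-- Injectivity of a symmetric translation-invariant MPS forces the on-site symmetry
to be realized linearly: the factor system `ω` must be trivial. -/
theorem injective_MPS_forces_linear_symmetry {G : Type*} [Group G] {d : ℕ} (hd : 1 ≤ d)
    (D : G → Matrix (Fin d) (Fin d) ℂ)
    (hDunitary : ∀ g, D g ∈ Matrix.unitaryGroup (Fin d) ℂ)
    (ω : G → G → ℂˣ)
    (hproj : ∀ g h, D g * D h = (ω g h : ℂ) • D (g * h))
    {N : ℕ} (hN : 1 ≤ N)
    (A : Fin d → Matrix (Fin N) (Fin N) ℂ)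
    (V : G → Matrix (Fin N) (Fin N) ℂ)
    (hVunitary : ∀ g, V g ∈ Matrix.unitaryGroup (Fin N) ℂ)
    (hsym : ∀ (g : G) (m : Fin d), ∑ n, (D g) m n • A n = (V g)ᴴ * A m * V g)
    (I : ℕ) (hI : 1 ≤ I) (hinj : Function.Injective (GammaMPS A I)) :
    ∀ g h : G, ω g h = 1 :=
  injective_MPS_forces_linear_symmetry_general D ω hproj hN A V hVunitary hsym I hI hinj
end

section
/- (Spin-1/2 LSM theorem, MPS form.) Let σx = !![0, 1; 1, 0] and σz = !![1, 0; 0, -1] be the Pauli matrices in Matrix (Fin 2) (Fin 2) ℂ. Let N ≥ 1, let A : Fin 2 → Matrix (Fin N) (Fin N) ℂ, and suppose there exist unitary matrices Vx, Vz ∈ Matrix (Fin N) (Fin N) ℂ such that for all m : Fin 2, ∑ n, σx m n • A n = Vxᴴ * A m * Vx and ∑ n, σz m n • A n = Vzᴴ * A m * Vz (i.e. the translation-invariant MPS is invariant under the on-site π-rotations about the x- and z-axes of a spin-1/2 chain). Then for every I ≥ 1 the map Γ_I is not injective; hence a spin-1/2 chain with these symmetries admits no injective (unique gapped) matrix product ground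 state. -/
/-!
Conjugation by `Vx` and `Vz` implements `σx` and `σz` on the physical index. Since `σx` and `σz`
anticommute, conjugation by `U = Vx Vz Vx Vz` acts as `-1`, i.e. the nonzero matrix `U`
anticommutes with every `A i`, so `P U = (-1)^I U P` for each product `P` of `I` tensors.
For odd `I` this forces `trace (U P) = 0`, so `Γ_I U = 0`. For even `I`, `U` commutes with `P`,
whence `Γ_I (M U) = Γ_I (U M)`; injectivity with `M = A i` gives `A i U = U A i`, so `U A i = 0`
and again `Γ_I U = 0`. Either way `Γ_I U = Γ_I 0` with `U ≠ 0`.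
-/

open Matrix

theorem List.prod_mul_of_forall_anticomm {R : Type*} [Ring R] {U : R} :
    ∀ {L : List R}, (∀ a ∈ L, a * U = -(U * a)) →
      L.prod * U = (-1) ^ L.length * (U * L.prod)
  | [], _ => by simp
  | a :: L, h => by
    have ih := List.prod_mul_of_forall_anticomm fun b hb => h b (List.mem_cons_of_mem a hb)
    calc (a :: L).prod * U = a * (L.prod * U) := by rw [List.prod_cons, mul_assoc]
      _ = (-1) ^ L.length * (a * U * L.prod) := by
        rw [ih, ((Commute.neg_one_right a).pow_right _).left_comm, mul_assoc]
      _ = (-1) ^ (a :: L).length * (U * (a :: L).prod) := by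
        rw [h a List.mem_cons_self, List.length_cons, pow_succ, List.prod_cons]
        noncomm_ring

section GammaMPS

variable {N : ℕ} {ι : Type*} {A : ι → Matrix (Fin N) (Fin N) ℂ}
  {U : Matrix (Fin N) (Fin N) ℂ}

theorem GammaMPS_zero (A : ι → Matrix (Fin N) (Fin N) ℂ) (I : ℕ) : GammaMPS A I 0 = 0 := by
  funext σ
  simp [GammaMPS]

theorem ofFn_prod_mul_of_anticomm (hAU : ∀ i, A i * U = -(U * A i)) {I : ℕ}
    (σ : Fin I → ι) :
    (List.ofFn fun k => A (σ k)).prod * U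
      = (-1) ^ I * (U * (List.ofFn fun k => A (σ k)).prod) := by
  simpa using List.prod_mul_of_forall_anticomm (L := List.ofFn fun k => A (σ k)) (U := U)
    (by simp [List.mem_ofFn, hAU])

theorem GammaMPS_eq_zero_of_anticomm_of_odd (hAU : ∀ i, A i * U = -(U * A i)) {I : ℕ}
    (hI : Odd I) : GammaMPS A I U = 0 := by
  funext σ
  have h := ofFn_prod_mul_of_anticomm hAU σ
  rw [hI.neg_one_pow, neg_one_mul] at h
  simpa [GammaMPS, ← self_eq_neg, h] using trace_mul_comm U (List.ofFn fun k => A (σ k)).prod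

theorem GammaMPS_mul_comm_of_anticomm_of_even (hAU : ∀ i, A i * U = -(U * A i)) {I : ℕ}
    (hI : Even I) (M : Matrix (Fin N) (Fin N) ℂ) :
    GammaMPS A I (M * U) = GammaMPS A I (U * M) := by
  funext σ
  have h := ofFn_prod_mul_of_anticomm hAU σ
  rw [hI.neg_one_pow, one_mul] at h
  simp only [GammaMPS]
  rw [mul_assoc, ← h, ← mul_assoc, trace_mul_comm (M * _), ← mul_assoc]

theorem GammaMPS_not_injective_of_anticomm (hU : U ≠ 0) (hAU : ∀ i, A i * U = -(U * A i))
    {I : ℕ} (hI : I ≠ 0) : ¬ Function.Injective (GammaMPS A I) := by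
  intro hinj
  suffices GammaMPS A I U = 0 from hU (hinj (this.trans (GammaMPS_zero A I).symm))
  rcases I.even_or_odd with hEven | hOdd
  · have hUA : ∀ i, U * A i = 0 := fun i => by
      have h := hinj (GammaMPS_mul_comm_of_anticomm_of_even hAU hEven (A i))
      rw [hAU, eq_comm] at h
      -- `Matrix` carries no `IsAddTorsionFree` instance, the underlying function type does
      exact (self_eq_neg (G := Fin N → Fin N → ℂ)).mp h
    obtain ⟨I, rfl⟩ := Nat.exists_eq_succ_of_ne_zero hI
    funext σ
    simp [GammaMPS, List.ofFn_succ, ← mul_assoc, hUA]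
  · exact GammaMPS_eq_zero_of_anticomm_of_odd hAU hOdd

end GammaMPS

theorem semiconjBy_of_star_mul_mul_eq {R : Type*} [Monoid R] [StarMul R]
    {V B C : R} (hV : V ∈ unitary R) (h : star V * B * V = C) : SemiconjBy V C B := by
  rw [SemiconjBy, ← h, ← mul_assoc, ← mul_assoc, Unitary.mul_star_self_of_mem hV, one_mul]

theorem anticomm_of_pauli_symmetry {N : ℕ} {A : Fin 2 → Matrix (Fin N) (Fin N) ℂ}
    {Vx Vz : Matrix (Fin N) (Fin N) ℂ}
    (hVx : Vx ∈ unitaryGroup (Fin N) ℂ) (hVz : Vz ∈ unitaryGroup (Fin N) ℂ)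
    (hsymx : ∀ m : Fin 2, ∑ n, (!![0, 1; 1, 0] : Matrix (Fin 2) (Fin 2) ℂ) m n • A n
      = Vxᴴ * A m * Vx)
    (hsymz : ∀ m : Fin 2, ∑ n, (!![1, 0; 0, -1] : Matrix (Fin 2) (Fin 2) ℂ) m n • A n
      = Vzᴴ * A m * Vz) (m : Fin 2) :
    A m * (Vx * Vz * Vx * Vz) = -(Vx * Vz * Vx * Vz * A m) := by
  have hx0 : SemiconjBy Vx (A 1) (A 0) :=
    semiconjBy_of_star_mul_mul_eq hVx <| by
      simpa [star_eq_conjTranspose] using (hsymx 0).symm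
  have hx1 : SemiconjBy Vx (A 0) (A 1) :=
    semiconjBy_of_star_mul_mul_eq hVx <| by
      simpa [star_eq_conjTranspose] using (hsymx 1).symm
  have hz0 : SemiconjBy Vz (A 0) (A 0) :=
    semiconjBy_of_star_mul_mul_eq hVz <| by
      simpa [star_eq_conjTranspose] using (hsymz 0).symm
  have hz1 : SemiconjBy Vz (-A 1) (A 1) :=
    semiconjBy_of_star_mul_mul_eq hVz <| by
      simpa [star_eq_conjTranspose] using (hsymz 1).symm
  have hU : SemiconjBy (Vx * Vz * Vx * Vz) (-A m) (A m) := by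
    -- follow `-A m` through the signed permutations `σz`, `σx`, `σz`, `σx` of `A 0, A 1`
    fin_cases m
    · exact ((hx0.mul_left hz1).mul_left hx1.neg_right).mul_left hz0.neg_right
    · exact ((hx1.mul_left hz0).mul_left hx0).mul_left hz1
  rw [← hU.eq, mul_neg]

/-- Spin-1/2 LSM theorem in MPS form: a translation-invariant MPS invariant under the
on-site π-rotations about the x- and z-axes (Pauli `σx` and `σz`) of a spin-1/2 chain
admits no injective (unique gapped) matrix product ground state. -/
theorem spin_half_LSM {N : ℕ} (hN : 1 ≤ N)
    (A : Fin 2 → Matrix (Fin N) (Fin N) ℂ)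
    (Vx Vz : Matrix (Fin N) (Fin N) ℂ)
    (hVx : Vx ∈ Matrix.unitaryGroup (Fin N) ℂ)
    (hVz : Vz ∈ Matrix.unitaryGroup (Fin N) ℂ)
    (hsymx : ∀ m : Fin 2, ∑ n, (!![0, 1; 1, 0] : Matrix (Fin 2) (Fin 2) ℂ) m n • A n
      = Vxᴴ * A m * Vx)
    (hsymz : ∀ m : Fin 2, ∑ n, (!![1, 0; 0, -1] : Matrix (Fin 2) (Fin 2) ℂ) m n • A n
      = Vzᴴ * A m * Vz) :
    ∀ I, 1 ≤ I → ¬ Function.Injective (GammaMPS A I) := by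
  intro I hI
  have : Nonempty (Fin N) := Fin.pos_iff_nonempty.mp hN
  have hU : Vx * Vz * Vx * Vz ∈ unitaryGroup (Fin N) ℂ :=
    mul_mem (mul_mem (mul_mem hVx hVz) hVx) hVz
  exact GammaMPS_not_injective_of_anticomm (Unitary.isUnit_coe (U := ⟨_, hU⟩)).ne_zero
    (anticomm_of_pauli_symmetry hVx hVz hsymx hsymz) (by omega)
end

section
/- (Lemma: a bond space containing both integer and half-odd-integer spins violates injectivity.) Let N ≥ 1, let ι be a finite type, let A : ι → Matrix (Fin N) (Fin N) ℂ, let ε ∈ {1, -1} ⊆ ℂ, and let X ∈ Matrix (Fin N) (Fin N) ℂ satisfy X * X = 1, X ≠ 1, X ≠ -1 (an involution with both eigenvalues present, encoding the presence of both integer and half-odd-integer bond spins), and X * A m * X = ε • A m for all m : ι (ε = (−1)^{2J} for physical spin J). Then for every I ≥ 1 there exist two distinct matrices M ≠ M' in Matrix (Fin N) (Fin N) ℂ with Γ_I(M) = Γ_I(M'); i.e. Γ_I is not injective for any I. -/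
open Matrix

/-! Conjugation by the involution `X` multiplies every product of `I` tensors by `ε ^ I`, so by
cyclicity of the trace `Γ_I (X M X) = Γ_I (ε ^ I • M)`. It remains to find `M` with
`X M X ≠ ε ^ I • M`. If `ε ^ I = 1`, any `M` not commuting with `X` will do; it exists because an
involution commuting with all matrices is a scalar `r` with `r² = 1`, i.e. `±1`. Otherwise
`M = 1` works. -/

theorem List.mul_prod_mul_eq_pow_length_smul {K R : Type*} [CommSemiring K] [Semiring R]
    [Algebra K R] {x : R} (hx : x * x = 1) {ε : K} :
    ∀ {l : List R}, (∀ a ∈ l, x * a * x = ε • a) → x * l.prod * x = ε ^ l.length • l.prod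
  | [], _ => by simp [hx]
  | a :: l, hl => by
    have hconj : x * (a * l.prod) * x = (x * a * x) * (x * l.prod * x) := by
      simp only [mul_assoc, ← mul_assoc x x, hx, one_mul]
    rw [List.prod_cons, hconj, hl a List.mem_cons_self,
      mul_prod_mul_eq_pow_length_smul hx fun b hb => hl b (List.mem_cons_of_mem a hb),
      smul_mul_smul_comm, List.length_cons, pow_succ']

namespace Matrix

variable {n R : Type*} [Fintype n] [DecidableEq n] [CommRing R] [NoZeroDivisors R]

theorem eq_one_or_eq_neg_one_of_mul_self_eq_one_of_forall_commute {X : Matrix n n R}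
    (hX : X * X = 1) (hcomm : ∀ M, Commute M X) : X = 1 ∨ X = -1 := by
  cases isEmpty_or_nonempty n
  · exact .inl (Subsingleton.elim _ _)
  obtain ⟨r, rfl⟩ := mem_range_scalar_iff_commute_single'.mpr fun _ _ => hcomm _
  have hr : r * r = 1 := (scalar_inj (n := n)).mp (by rw [map_mul, map_one, hX])
  rcases mul_self_eq_one_iff.mp hr with rfl | rfl
  · exact .inl (map_one _)
  · exact .inr (by rw [map_neg, map_one])

theorem exists_mul_mul_ne_smul {X : Matrix n n R} (hX : X * X = 1) (h1 : X ≠ 1) (hm1 : X ≠ -1)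
    (c : R) : ∃ M : Matrix n n R, X * M * X ≠ c • M := by
  by_cases hc : c = 1
  · subst hc
    by_contra! hfix
    refine (eq_one_or_eq_neg_one_of_mul_self_eq_one_of_forall_commute hX fun M => ?_).elim h1 hm1
    calc M * X = X * M * X * X := by rw [hfix, one_smul]
      _ = X * M := by rw [mul_assoc _ X X, hX, mul_one]
  · have : Nontrivial (Matrix n n R) := nontrivial_of_ne X 1 h1
    refine ⟨1, fun h => hc (smul_left_injective R (one_ne_zero : (1 : Matrix n n R) ≠ 0) ?_)⟩
    simpa [hX] using h.symm

end Matrix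

theorem GammaMPS_mul_mul_eq_pow_smul {N : ℕ} {ι : Type*} {A : ι → Matrix (Fin N) (Fin N) ℂ}
    {ε : ℂ} {X : Matrix (Fin N) (Fin N) ℂ} (hX : X * X = 1) (hconj : ∀ m, X * A m * X = ε • A m)
    (I : ℕ) (M : Matrix (Fin N) (Fin N) ℂ) :
    GammaMPS A I (X * M * X) = GammaMPS A I (ε ^ I • M) := by
  funext σ
  set P := (List.ofFn fun i => A (σ i)).prod
  have hP : X * P * X = ε ^ I • P := by
    simpa using List.mul_prod_mul_eq_pow_length_smul hX (ε := ε)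
      (l := List.ofFn fun i => A (σ i)) (by simp [hconj])
  calc trace (X * M * X * P) = trace (M * (X * P * X)) := by
        rw [mul_assoc (X * M), mul_assoc X, trace_mul_comm X]; simp only [mul_assoc]
    _ = trace (ε ^ I • M * P) := by rw [hP, mul_smul_comm, smul_mul_assoc]

theorem bond_mixed_spins_not_injective_general {N : ℕ} {ι : Type*}
    (A : ι → Matrix (Fin N) (Fin N) ℂ)
    (ε : ℂ)
    (X : Matrix (Fin N) (Fin N) ℂ)
    (hX2 : X * X = 1) (hXne1 : X ≠ 1) (hXnem1 : X ≠ -1)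
    (hconj : ∀ m : ι, X * A m * X = ε • A m) :
    ∀ I, 1 ≤ I → ∃ M M' : Matrix (Fin N) (Fin N) ℂ,
      M ≠ M' ∧ GammaMPS A I M = GammaMPS A I M' := by
  intro I _
  obtain ⟨M, hM⟩ := exists_mul_mul_ne_smul hX2 hXne1 hXnem1 (ε ^ I)
  exact ⟨_, _, hM, GammaMPS_mul_mul_eq_pow_smul hX2 hconj I M⟩

/-- Lemma: if the bond space carries a nontrivial involution `X` (both eigenvalues ±1
present, encoding both integer and half-odd-integer bond spins) conjugating the MPS
tensor into `ε • A m` with `ε = ±1`, then `Γ_I` is not injective for any length `I`. -/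
theorem bond_mixed_spins_not_injective {N : ℕ} (hN : 1 ≤ N) {ι : Type*} [Fintype ι]
    (A : ι → Matrix (Fin N) (Fin N) ℂ)
    (ε : ℂ) (hε : ε ∈ ({1, -1} : Set ℂ))
    (X : Matrix (Fin N) (Fin N) ℂ)
    (hX2 : X * X = 1) (hXne1 : X ≠ 1) (hXnem1 : X ≠ -1)
    (hconj : ∀ m : ι, X * A m * X = ε • A m) :
    ∀ I, 1 ≤ I → ∃ M M' : Matrix (Fin N) (Fin N) ℂ,
      M ≠ M' ∧ GammaMPS A I M = GammaMPS A I M' :=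
  bond_mixed_spins_not_injective_general A ε X hX2 hXne1 hXnem1 hconj
end

section
/- (f-block decomposition of the ground space with broken translation symmetry.) Let f ≥ 1, N ≥ 1, let ι be a finite type, let A : ZMod f → ι → Matrix (Fin N) (Fin N) ℂ be a family of MPS tensors indexed cyclically, and let α : ZMod f → ℂ. For k : ZMod f and m : ι define the block-diagonal matrix C k m := Matrix.blockDiagonal (fun j : ZMod f => A (j + k) m), and define Θ := Matrix.blockDiagonal (fun j : ZMod f => α j • (1 : Matrix (Fin N) (Fin N) ℂ)). Then for every n ≥ 1 and every m : Fin (n*f) → ι, trace(Θ * ∏_{i=0}^{n*f−1} C (i : ZMod f) (m i)) = ∑_{k : ZMod f} α k * trace(∏_{i=0}^{n*f−1} A (k + i) (m i)), where both products are ordered by increasing i. (This expresses the non-injective f-site-periodic MPS vector as ∑_k α_k |ψ_k⟩ with each |ψ_k⟩ an injective, f-site translation-invariant MPS.) -/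
open Matrix

private lemma blockDiagonal_list_prod {o m R : Type*} [Fintype o] [DecidableEq o]
    [Fintype m] [DecidableEq m] [CommRing R] :
    ∀ l : List (o → Matrix m m R),
      (l.map Matrix.blockDiagonal).prod
        = Matrix.blockDiagonal fun j => (l.map (fun F => F j)).prod
  | [] => by simp only [List.map_nil, List.prod_nil]; exact Matrix.blockDiagonal_one.symm
  | F :: l => by
      simp [blockDiagonal_list_prod l, ← Matrix.blockDiagonal_mul]

/-- f-block decomposition of the ground space with broken translation symmetry: the
coefficient of the non-injective f-site-periodic MPS built out of the block-diagonal
tensors `C k m = blockDiagonal (fun j => A (j + k) m)` with boundary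
`Θ = blockDiagonal (fun j => α j • 1)` equals `∑ k, α k ⟨ψ_k⟩`, where `⟨ψ_k⟩` is the
trace of the ordered product of the cyclically shifted tensors `A (k + i)`. -/
theorem f_block_decomposition (f : ℕ) [NeZero f] (hf : 1 ≤ f) {N : ℕ} (hN : 1 ≤ N)
    {ι : Type*} [Fintype ι]
    (A : ZMod f → ι → Matrix (Fin N) (Fin N) ℂ) (α : ZMod f → ℂ) :
    ∀ (n : ℕ), 1 ≤ n → ∀ m : Fin (n * f) → ι,
      Matrix.trace
        ((Matrix.blockDiagonal fun j : ZMod f =>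
            α j • (1 : Matrix (Fin N) (Fin N) ℂ)) *
          (List.ofFn fun i : Fin (n * f) =>
            Matrix.blockDiagonal fun j : ZMod f =>
              A (j + ((i : ℕ) : ZMod f)) (m i)).prod)
      = ∑ k : ZMod f, α k *
          Matrix.trace
            ((List.ofFn fun i : Fin (n * f) =>
              A (k + ((i : ℕ) : ZMod f)) (m i)).prod) := by
  intro n hn m
  have h1 : (List.ofFn fun i : Fin (n * f) =>
      Matrix.blockDiagonal fun j : ZMod f => A (j + ((i : ℕ) : ZMod f)) (m i))
      = (List.ofFn fun i : Fin (n * f) =>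
          (fun j : ZMod f => A (j + ((i : ℕ) : ZMod f)) (m i))).map
        Matrix.blockDiagonal := by
    rw [List.map_ofFn]; rfl
  rw [h1, blockDiagonal_list_prod, ← Matrix.blockDiagonal_mul,
    Matrix.trace_blockDiagonal]
  refine Finset.sum_congr rfl fun k _ => ?_
  rw [smul_mul_assoc, one_mul, Matrix.trace_smul, smul_eq_mul]
  congr 1
  simp [Function.comp_def, add_comm]
end

section
/- (Local symmetry condition implies global MPS invariance.) Let N ≥ 1, let ι be a finite type, let A : ι → Matrix (Fin N) (Fin N) ℂ, let D ∈ Matrix ι ι ℂ, and let V ∈ Matrix (Fin N) (Fin N) ℂ be invertible with ∑_{n : ι} D m n • A n = V⁻¹ * A m * V for all m : ι. Then for every chain length L and every m : Fin L → ι, ∑_{n : Fin L → ι} (∏_{i} D (m i) (n i)) * trace(A(n 0) * A(n 1) * ⋯ * A(n (L−1))) = trace(A(m 0) * A(m 1) * ⋯ * A(m (L−1))); i.e. the translation-invariant MPS state is invariant under the global on-site transformation U = D ⊗ D ⊗ ⋯ ⊗ D. -/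
open Matrix

/-- Local symmetry condition implies global MPS invariance: if
`∑ n, D m n • A n = V⁻¹ * A m * V` for an invertible `V`, then the coefficients
`trace (A (m 0) * ⋯ * A (m (L-1)))` of the translation-invariant MPS are invariant
under the global on-site transformation `D ⊗ D ⊗ ⋯ ⊗ D`. -/
theorem local_symmetry_implies_global_invariance {N : ℕ} (hN : 1 ≤ N)
    {ι : Type*} [Fintype ι]
    (A : ι → Matrix (Fin N) (Fin N) ℂ)
    (D : Matrix ι ι ℂ)
    (V : Matrix (Fin N) (Fin N) ℂ) (hV : IsUnit V)
    (hsym : ∀ m : ι, ∑ n : ι, D m n • A n = V⁻¹ * A m * V) :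
    ∀ (L : ℕ) (m : Fin L → ι),
      ∑ n : Fin L → ι, (∏ i : Fin L, D (m i) (n i)) *
          Matrix.trace (List.ofFn fun i => A (n i)).prod
        = Matrix.trace (List.ofFn fun i => A (m i)).prod := by
  have hdet : IsUnit V.det := (Matrix.isUnit_iff_isUnit_det V).mp hV
  have hVV : V * V⁻¹ = 1 := Matrix.mul_nonsing_inv V hdet
  have hVV' : V⁻¹ * V = 1 := Matrix.nonsing_inv_mul V hdet
  have key : ∀ (L : ℕ) (m : Fin L → ι),
      ∑ n : Fin L → ι, (∏ i : Fin L, D (m i) (n i)) • (List.ofFn fun i => A (n i)).prod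
        = V⁻¹ * (List.ofFn fun i => A (m i)).prod * V := by
    intro L
    induction L with
    | zero =>
      intro m
      simp [hVV']
    | succ L ih =>
      intro m
      have e := (Fin.consEquiv fun _ : Fin (L+1) => ι)
      rw [← Fintype.sum_equiv (Fin.consEquiv fun _ : Fin (L+1) => ι)
        (fun p : ι × (Fin L → ι) => (D (m 0) p.1 • A p.1) *
          ((∏ i : Fin L, D (m i.succ) (p.2 i)) • (List.ofFn fun i => A (p.2 i)).prod))
        (fun n => (∏ i : Fin (L+1), D (m i) (n i)) • (List.ofFn fun i => A (n i)).prod)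
        (by
          rintro ⟨a, n⟩
          simp [Fin.consEquiv, Fin.prod_univ_succ, List.ofFn_succ, smul_smul,
            smul_mul_assoc, mul_smul_comm]
          rw [mul_comm])]
      rw [Fintype.sum_prod_type]
      dsimp only
      rw [← Finset.sum_mul_sum]
      rw [hsym, ih (fun i => m i.succ)]
      rw [List.ofFn_succ, List.prod_cons]
      have : V⁻¹ * A (m 0) * V * (V⁻¹ * (List.ofFn fun i => A (m i.succ)).prod * V)
          = V⁻¹ * (A (m 0) * (List.ofFn fun i => A (m i.succ)).prod) * V := by
        simp only [Matrix.mul_assoc]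
        rw [← Matrix.mul_assoc V V⁻¹, hVV, Matrix.one_mul]
      rw [this]
  intro L m
  calc ∑ n : Fin L → ι, (∏ i : Fin L, D (m i) (n i)) *
          Matrix.trace (List.ofFn fun i => A (n i)).prod
      = Matrix.trace (∑ n : Fin L → ι,
          (∏ i : Fin L, D (m i) (n i)) • (List.ofFn fun i => A (n i)).prod) := by
        rw [Matrix.trace_sum]
        simp [Matrix.trace_smul, smul_eq_mul]
    _ = Matrix.trace (V⁻¹ * (List.ofFn fun i => A (m i)).prod * V) := by rw [key]
    _ = Matrix.trace (List.ofFn fun i => A (m i)).prod := by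
        rw [Matrix.trace_mul_cycle, hVV, Matrix.one_mul]
end

section
/- (The Pauli representation of ℤ₂ × ℤ₂ is genuinely projective.) Let σx = !![0, 1; 1, 0] and σz = !![1, 0; 0, -1] in Matrix (Fin 2) (Fin 2) ℂ, and define P : ZMod 2 × ZMod 2 → Matrix (Fin 2) (Fin 2) ℂ by P (a, b) = σx^(a.val) * σz^(b.val) (so P(0,0) = 1, P(1,0) = σx, P(0,1) = σz, P(1,1) = σx * σz). Then there is no function θ : ZMod 2 × ZMod 2 → ℂˣ such that the rephased map g ↦ (θ g : ℂ) • P g is multiplicative, i.e. such that ((θ g : ℂ) • P g) * ((θ h : ℂ) • P h) = (θ (g + h) : ℂ) • P (g + h) for all g, h. (The on-site ℤ₂ × ℤ₂ symmetry of a spin-1/2, generated by π-rotations about the x- and z-axes, is realized projectively and cannot be rephased to a linear representation, corresponding to the nontrivial class in H²(ℤ₂ × ℤ₂, U(1)).) -/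
open Matrix

/-- The Pauli representation of ℤ₂ × ℤ₂ is genuinely projective: with
`P (a, b) = σx^a * σz^b`, no rephasing `g ↦ (θ g) • P g` is multiplicative; the
on-site ℤ₂ × ℤ₂ symmetry of a spin-1/2 corresponds to the nontrivial class in
H²(ℤ₂ × ℤ₂, U(1)). -/
theorem pauli_rep_genuinely_projective :
    ¬ ∃ θ : ZMod 2 × ZMod 2 → ℂˣ,
      ∀ g h : ZMod 2 × ZMod 2,
        ((θ g : ℂ) • ((!![0, 1; 1, 0] : Matrix (Fin 2) (Fin 2) ℂ) ^ g.1.val *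
            (!![1, 0; 0, -1] : Matrix (Fin 2) (Fin 2) ℂ) ^ g.2.val)) *
          ((θ h : ℂ) • ((!![0, 1; 1, 0] : Matrix (Fin 2) (Fin 2) ℂ) ^ h.1.val *
            (!![1, 0; 0, -1] : Matrix (Fin 2) (Fin 2) ℂ) ^ h.2.val))
        = (θ (g + h) : ℂ) • ((!![0, 1; 1, 0] : Matrix (Fin 2) (Fin 2) ℂ) ^ (g + h).1.val *
            (!![1, 0; 0, -1] : Matrix (Fin 2) (Fin 2) ℂ) ^ (g + h).2.val) := by
  rintro ⟨θ, hθ⟩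
  have h1 := hθ (1, 0) (0, 1)
  have h2 := hθ (0, 1) (1, 0)
  have e1 := congrFun (congrFun h1 1) 0
  have e2 := congrFun (congrFun h2 1) 0
  have hv : ((1 : ZMod 2)).val = 1 := rfl
  have hv0 : ((0 : ZMod 2)).val = 0 := rfl
  simp only [Prod.fst, Prod.snd, Prod.mk_add_mk, add_zero, zero_add, hv, hv0, pow_one,
    pow_zero, mul_one, one_mul, Matrix.smul_apply, Matrix.mul_apply, Fin.sum_univ_two,
    Matrix.smul_mul, Matrix.mul_smul, Matrix.cons_val', Matrix.cons_val_zero,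
    Matrix.cons_val_one, Matrix.head_cons, Matrix.empty_val',
    Matrix.cons_val_fin_one, smul_eq_mul] at e1 e2
  norm_num at e1 e2
  have hne : (θ (1,0) : ℂ) * (θ (0,1) : ℂ) ≠ 0 :=
    mul_ne_zero (θ _).ne_zero (θ _).ne_zero
  apply hne
  linear_combination (e1 - e2) / 2
end
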